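/- The fixed point subalgebra of the Boolean C*-algebra under the shift, and under the permutations, both equal ℂP_# ⊕ ℂP_#^⊥: for X ∈ 𝔟 the following are equivalent: (i) U X U* = X; (ii) U_g X U_g* = X for every finitely supported permutation g of ℤ; (iii) X = a P_# + b (I − P_#) for some a, b ∈ ℂ. -/

import Mathlib

open scoped InnerProductSpace ComplexOrder
open ContinuousLinearMap Filter

noncomputable section

/-- The Boolean Fock space `Γ = ℓ²({#} ∪ ℤ)`, concretely `ℓ²(Option ℤ)` (with `none`
playing the role of `#`). -/
abbrev BF : Type := lp (fun _ : Option ℤ => ℂ) 2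

/-- The canonical orthonormal basis: `eb none = e_#` and `eb (some j) = e_j`. -/
noncomputable def eb (i : Option ℤ) : BF := lp.single 2 i 1

/-- The rank-one orthogonal projection `P_#` onto `ℂ e_#`. -/
noncomputable def Psharp : BF →L[ℂ] BF := (innerSL ℂ (eb none)).smulRight (eb none)

/-- Membership in the Boolean C*-algebra `𝔟 = K(Γ) + ℂI`. -/
def MemBoole (X : BF →L[ℂ] BF) : Prop :=
  ∃ (A : BF →L[ℂ] BF) (b : ℂ), IsCompactOperator ⇑A ∧ X = A + b • (1 : BF →L[ℂ] BF)

/-- `U` is the unitary implementing the shift: `U e_# = e_#`, `U e_j = e_{j+1}`. -/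
def IsBooleShift (U : BF →L[ℂ] BF) : Prop :=
  U (eb none) = eb none ∧ ∀ j : ℤ, U (eb (some j)) = eb (some (j + 1))

/-- `V g` is the unitary implementing the permutation `g`: `V g e_# = e_#`,
`V g e_j = e_{g j}`. -/
def IsBoolePermAction (V : Equiv.Perm ℤ → (BF →L[ℂ] BF)) : Prop :=
  ∀ g : Equiv.Perm ℤ, V g (eb none) = eb none ∧
    ∀ j : ℤ, V g (eb (some j)) = eb (some (g j))

/-- A permutation of `ℤ` is finitely supported if it moves only finitely many points. -/
def FinSupported (g : Equiv.Perm ℤ) : Prop := {j : ℤ | g j ≠ j}.Finite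

/-!
Both `U` and every `U_g` permute the basis `(e_i)` and fix `e_#`, so if `X = A + b I` is fixed,
the matrix of the compact part `A` is constant along the orbits of the induced action on pairs
of indices. For every pair other than `(#, #)` these orbits let one index escape to infinity
while the entry stays the same. But `⟪e_{p n}, y_n⟫` with `p` injective and `y_n` in a compact
set (`A` applied to unit vectors, or the single vector `A* e_#`) cannot be a nonzero constant:
along a subsequence `y_n` converges, and the coefficients of a fixed vector decay by Bessel's
inequality. Hence `A` is a multiple of `P_#`. Conversely `a P_# + b (I - P_#)` commutes with
every unitary that permutes the basis and fixes `e_#`.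
-/

open Topology Function

section Orthonormal

variable {𝕜 E ι : Type*} [RCLike 𝕜] [NormedAddCommGroup E] [InnerProductSpace 𝕜 E]
  {e : ι → E}

theorem Orthonormal.tendsto_inner_cofinite (he : Orthonormal 𝕜 e) (x : E) :
    Tendsto (fun i => ⟪e i, x⟫_𝕜) cofinite (𝓝 0) := by
  rw [tendsto_zero_iff_norm_tendsto_zero]
  simpa using (he.inner_products_summable (x := x)).tendsto_cofinite_zero.sqrt

theorem Orthonormal.eq_zero_of_inner_eq_of_isCompact (he : Orthonormal 𝕜 e) {K : Set E}
    (hK : IsCompact K) {y : ℕ → E} (hy : ∀ n, y n ∈ K) {p : ℕ → ι} (hp : Injective p) {c : 𝕜}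
    (h : ∀ n, ⟪e (p n), y n⟫_𝕜 = c) : c = 0 := by
  obtain ⟨L, -, φ, hφ, hyL⟩ := hK.tendsto_subseq hy
  have hpφ : Tendsto (p ∘ φ) atTop cofinite := by
    rw [← Nat.cofinite_eq_atTop]
    exact (hp.comp hφ.injective).tendsto_cofinite
  have hL : Tendsto (fun k => ⟪e (p (φ k)), L⟫_𝕜) atTop (𝓝 0) :=
    (he.tendsto_inner_cofinite L).comp hpφ
  have hdiff : Tendsto (fun k => ⟪e (p (φ k)), y (φ k) - L⟫_𝕜) atTop (𝓝 0) := by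
    refine squeeze_zero_norm (fun k => ?_) (tendsto_iff_norm_sub_tendsto_zero.mp hyL)
    simpa [he.1] using norm_inner_le_norm (𝕜 := 𝕜) (e (p (φ k))) (y (φ k) - L)
  have hy0 : Tendsto (fun k => ⟪e (p (φ k)), y (φ k)⟫_𝕜) atTop (𝓝 0) := by
    simpa [← inner_add_right] using hL.add hdiff
  simpa [h] using hy0

theorem Orthonormal.eq_zero_of_inner_apply_eq (he : Orthonormal 𝕜 e) {A : E →L[𝕜] E}
    (hA : IsCompactOperator A) {p q : ℕ → ι} (hp : Injective p) {c : 𝕜}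
    (h : ∀ n, ⟪e (p n), A (e (q n))⟫_𝕜 = c) : c = 0 := by
  obtain ⟨K, hK, hAK⟩ := IsCompactOperator.image_closedBall_subset_compact
    (f := (A : E →ₗ[𝕜] E)) hA 1
  exact he.eq_zero_of_inner_eq_of_isCompact hK
    (fun n => hAK ⟨e (q n), by simp [he.1], rfl⟩) hp h

theorem Orthonormal.eq_zero_of_inner_apply_eq_left [CompleteSpace E] (he : Orthonormal 𝕜 e)
    (A : E →L[𝕜] E) (i : ι) {q : ℕ → ι} (hq : Injective q) {c : 𝕜}
    (h : ∀ n, ⟪e i, A (e (q n))⟫_𝕜 = c) : c = 0 := by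
  have hadj : ∀ n, ⟪e (q n), adjoint A (e i)⟫_𝕜 = star c := fun n => by
    rw [adjoint_inner_right, ← inner_conj_symm, h]
    rfl
  exact star_eq_zero.mp (he.eq_zero_of_inner_eq_of_isCompact isCompact_singleton
    (fun _ => rfl) hq hadj)

end Orthonormal

theorem inner_eb_left (i : Option ℤ) (f : BF) : ⟪eb i, f⟫_ℂ = f i := by
  simp [eb, lp.inner_single_left]

theorem inner_eb_eb (i j : Option ℤ) : ⟪eb i, eb j⟫_ℂ = if i = j then 1 else 0 := by
  rw [inner_eb_left]
  simp [eb, lp.single_apply, Pi.single_apply]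

theorem orthonormal_eb : Orthonormal ℂ eb :=
  orthonormal_iff_ite.mpr inner_eb_eb

theorem ext_inner_eb {x y : BF} (h : ∀ i, ⟪eb i, x⟫_ℂ = ⟪eb i, y⟫_ℂ) : x = y :=
  lp.ext (funext fun i => by simpa only [inner_eb_left] using h i)

theorem ext_eb {T S : BF →L[ℂ] BF} (h : ∀ i, T (eb i) = S (eb i)) : T = S := by
  let b : HilbertBasis (Option ℤ) ℂ BF := ⟨LinearIsometryEquiv.refl ℂ BF⟩
  have hb : ⇑b = eb := funext fun i => (b.repr_symm_single i).symm
  refine ContinuousLinearMap.ext_on (Submodule.dense_iff_topologicalClosure_eq_top.mpr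
    b.dense_span) ?_
  rintro _ ⟨i, rfl⟩
  rw [hb]
  exact h i

theorem Psharp_apply (x : BF) : Psharp x = ⟪eb none, x⟫_ℂ • eb none := rfl

def PreservesEntries (A : BF →L[ℂ] BF) (σ : Equiv.Perm (Option ℤ)) : Prop :=
  ∀ i j, ⟪eb (σ i), A (eb (σ j))⟫_ℂ = ⟪eb i, A (eb j)⟫_ℂ

section BasisPermutation

variable {W : BF →L[ℂ] BF} {σ : Equiv.Perm (Option ℤ)}

theorem adjoint_apply_eb (hW : ∀ i, W (eb i) = eb (σ i)) (i : Option ℤ) :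
    adjoint W (eb i) = eb (σ.symm i) :=
  ext_inner_eb fun k => by
    simp only [adjoint_inner_right, hW, inner_eb_eb, Equiv.eq_symm_apply]

theorem mul_adjoint_eq_one (hW : ∀ i, W (eb i) = eb (σ i)) : W * adjoint W = 1 :=
  ext_eb fun i => by simp [adjoint_apply_eb hW, hW]

theorem conj_Psharp (hW : ∀ i, W (eb i) = eb (σ i)) (hσ : σ none = none) :
    W * Psharp * adjoint W = Psharp :=
  ContinuousLinearMap.ext fun x => by
    simp [Psharp_apply, adjoint_inner_right, hW, hσ]

theorem conj_smul_Psharp_add_smul (hW : ∀ i, W (eb i) = eb (σ i)) (hσ : σ none = none)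
    (a b : ℂ) :
    W * (a • Psharp + b • (1 - Psharp)) * adjoint W = a • Psharp + b • (1 - Psharp) := by
  simp only [mul_add, add_mul, mul_sub, sub_mul, mul_smul_comm, smul_mul_assoc, mul_one,
    conj_Psharp hW hσ, mul_adjoint_eq_one hW]

theorem preservesEntries_of_conj_eq (hW : ∀ i, W (eb i) = eb (σ i)) {X : BF →L[ℂ] BF}
    (hX : W * X * adjoint W = X) : PreservesEntries X σ := fun i j => by
  conv_lhs => rw [← hX]
  rw [mul_apply_eq_comp, mul_apply_eq_comp, adjoint_apply_eb hW, ← adjoint_inner_left,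
    adjoint_apply_eb hW]
  simp

end BasisPermutation

theorem PreservesEntries.of_add_smul_one {A : BF →L[ℂ] BF} {b : ℂ} {σ : Equiv.Perm (Option ℤ)}
    (h : PreservesEntries (A + b • 1) σ) : PreservesEntries A σ := fun i j => by
  simpa [inner_add_right, inner_smul_right, inner_eb_eb, σ.injective.eq_iff] using h i j

theorem PreservesEntries.pow {A : BF →L[ℂ] BF} {σ : Equiv.Perm (Option ℤ)}
    (h : PreservesEntries A σ) (n : ℕ) : PreservesEntries A (σ ^ n) := by
  induction n with
  | zero => exact fun i j => rfl
  | succ n ih =>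
    exact fun i j => by rw [pow_succ, Equiv.Perm.mul_apply, Equiv.Perm.mul_apply, ih, h]

theorem eq_inner_smul_Psharp {A : BF →L[ℂ] BF}
    (h : ∀ i j, i ≠ none ∨ j ≠ none → ⟪eb i, A (eb j)⟫_ℂ = 0) :
    A = ⟪eb none, A (eb none)⟫_ℂ • Psharp :=
  ext_eb fun j => ext_inner_eb fun i => by
    rcases i with _ | i <;> rcases j with _ | j <;>
      simp [Psharp_apply, inner_eb_eb, h, orthonormal_eb.1]

theorem eq_inner_smul_Psharp_of_isCompactOperator {A : BF →L[ℂ] BF} (hA : IsCompactOperator A)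
    (hmove : ∀ k : ℤ, ∃ σ : ℕ → Equiv.Perm (Option ℤ), Injective (fun n => σ n (some k)) ∧
      ∀ n, σ n none = none ∧ PreservesEntries A (σ n)) :
    A = ⟪eb none, A (eb none)⟫_ℂ • Psharp := by
  refine eq_inner_smul_Psharp fun i j hij => ?_
  rcases i with _ | k
  · obtain ⟨k, rfl⟩ := Option.ne_none_iff_exists'.mp (hij.resolve_left (not_not.mpr rfl))
    obtain ⟨σ, hinj, hσ⟩ := hmove k
    refine orthonormal_eb.eq_zero_of_inner_apply_eq_left A none hinj fun n => ?_
    simpa only [(hσ n).1] using (hσ n).2 none (some k)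
  · obtain ⟨σ, hinj, hσ⟩ := hmove k
    exact orthonormal_eb.eq_zero_of_inner_apply_eq hA hinj fun n => (hσ n).2 (some k) j

theorem add_smul_one_eq_of_eq_smul_Psharp {A : BF →L[ℂ] BF} {c : ℂ} (hA : A = c • Psharp)
    (b : ℂ) : A + b • 1 = (c + b) • Psharp + b • (1 - Psharp) := by
  rw [hA]
  module

def optionShift : Equiv.Perm (Option ℤ) := Equiv.optionCongr (Equiv.addRight 1)

theorem optionShift_pow_some (n : ℕ) (k : ℤ) : (optionShift ^ n) (some k) = some (k + n) := by
  induction n with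
  | zero => simp
  | succ n ih =>
    rw [pow_succ', Equiv.Perm.mul_apply, ih]
    simp [optionShift, add_assoc]

theorem finSupported_swap (a b : ℤ) : FinSupported (Equiv.swap a b) :=
  (Set.toFinite {a, b}).subset fun j hj => by
    by_contra hab
    simp only [Set.mem_insert_iff, Set.mem_singleton_iff, not_or] at hab
    exact hj (Equiv.swap_apply_of_ne_of_ne hab.1 hab.2)

/-- Proposition 6.1 (Proposition `fixal`): the fixed point subalgebra of the Boolean
C*-algebra `𝔟` under the shift, and under the (finitely supported) permutations, both
equal `ℂP_# ⊕ ℂP_#^⊥`: for `X ∈ 𝔟`, the conditions `U X U* = X`,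
`U_g X U_g* = X` for all finitely supported permutations `g`, and
`X = a P_# + b (I − P_#)` for some `a, b ∈ ℂ`, are all equivalent. -/
theorem boolean_fixed_point_subalgebra
    (U : BF →L[ℂ] BF) (hU : IsBooleShift U)
    (V : Equiv.Perm ℤ → (BF →L[ℂ] BF)) (hV : IsBoolePermAction V)
    (X : BF →L[ℂ] BF) (hX : MemBoole X) :
    ((U * X * ContinuousLinearMap.adjoint U = X) ↔
      ∃ a b : ℂ, X = a • Psharp + b • ((1 : BF →L[ℂ] BF) - Psharp)) ∧
    ((∀ g : Equiv.Perm ℤ, FinSupported g →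
        V g * X * ContinuousLinearMap.adjoint (V g) = X) ↔
      ∃ a b : ℂ, X = a • Psharp + b • ((1 : BF →L[ℂ] BF) - Psharp)) := by
  obtain ⟨A, b, hA, rfl⟩ := hX
  have hUe : ∀ i, U (eb i) = eb (optionShift i) := by
    rintro (_ | j) <;> simp [optionShift, hU.1, hU.2]
  have hVe : ∀ g i, V g (eb i) = eb (g.optionCongr i) := by
    rintro g (_ | j) <;> simp [(hV g).1, (hV g).2]
  refine ⟨⟨fun hfix => ?_, fun ⟨a, c, h⟩ => h ▸ conj_smul_Psharp_add_smul hUe rfl a c⟩,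
    ⟨fun hfix => ?_, fun ⟨a, c, h⟩ g _ => h ▸ conj_smul_Psharp_add_smul (hVe g) rfl a c⟩⟩
  · have hAU := (preservesEntries_of_conj_eq hUe hfix).of_add_smul_one
    refine ⟨_, _, add_smul_one_eq_of_eq_smul_Psharp (eq_inner_smul_Psharp_of_isCompactOperator hA
      fun k => ⟨fun n => optionShift ^ n, fun m n hmn => ?_,
        fun n => ⟨Equiv.Perm.pow_apply_eq_self_of_apply_eq_self rfl n, hAU.pow n⟩⟩) b⟩
    simpa [optionShift_pow_some] using hmn
  · have hAV : ∀ k n : ℤ, PreservesEntries A (Equiv.swap k n).optionCongr := fun k n =>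
      (preservesEntries_of_conj_eq (hVe _) (hfix _ (finSupported_swap k n))).of_add_smul_one
    refine ⟨_, _, add_smul_one_eq_of_eq_smul_Psharp (eq_inner_smul_Psharp_of_isCompactOperator hA
      fun k => ⟨fun n => (Equiv.swap k (k + 1 + n)).optionCongr, fun m n hmn => ?_,
        fun n => ⟨rfl, hAV _ _⟩⟩) b⟩
    simpa using hmn

end
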